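/- Let (M_n)_{n≥1} satisfy M_n M_m ≤ M_{n+m−1} for all n, m ≥ 1. Then the algebra z·ℂ[[z]]_{(M_n)} of formal power series f = ∑_{n≥1} f_n z^n with |f_n| ≤ c_1 c_2^n M_n (for some c_1, c_2 > 0 depending on f) is closed under composition: if f, g ∈ z·ℂ[[z]]_{(M_n)} then f ∘ g ∈ z·ℂ[[z]]_{(M_n)}. -/

import Mathlib

/-!
Iterating `M_a M_b ≤ M_{a+b-1}` gives `M_{n₁} ⋯ M_{n_m} ≤ M_{n-m+1}` for every composition
`n₁ + ⋯ + n_m = n` into positive parts, and once more `M_m M_{n-m+1} ≤ M_n`. With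
`|f_m| ≤ a₁ a₂^m M_m` and `|g_k| ≤ b₁ b₂^k M_k`, each of the at most `2^(n-1)` compositions
contributes at most `a₁ (a₂ b₁)^m b₂^n M_n`, and there are at most `n ≤ 2^n` values of `m`,
so `|(f ∘ g)_n| ≤ a₁ (4 b₂ max(a₂ b₁, 1))^n M_n`.
-/

open Finset

/-- Compositions of `n` into `m` positive parts. -/
def comps (m n : ℕ) : Finset (Fin m → ℕ) :=
  (Finset.Nat.antidiagonalTuple m n).filter fun t => ∀ i, 1 ≤ t i

/-- `f` belongs to the class `z·ℂ[[z]]_{(M_n)}`. -/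
def InClass (M : ℕ → ℝ) (f : ℕ → ℂ) : Prop :=
  ∃ c₁ > (0 : ℝ), ∃ c₂ > (0 : ℝ), ∀ n : ℕ, 1 ≤ n → ‖f n‖ ≤ c₁ * c₂ ^ n * M n

/-- Coefficients of the composition `f ∘ g` of formal power series without
constant term: `(f∘g)_n = ∑_{m=1}^n f_m ∑_{n₁+⋯+n_m=n, nᵢ≥1} g_{n₁}⋯g_{n_m}`. -/
noncomputable def compCoef (f g : ℕ → ℂ) : ℕ → ℂ := fun n =>
  ∑ m ∈ Finset.Icc 1 n, f m * ∑ t ∈ comps m n, ∏ i, g (t i)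

lemma mem_comps {m n : ℕ} {t : Fin m → ℕ} :
    t ∈ comps m n ↔ ∑ i, t i = n ∧ ∀ i, 1 ≤ t i := by
  simp [comps, Finset.Nat.mem_antidiagonalTuple]

def compositionOfMemComps {m n : ℕ} (t : comps m n) : Composition n where
  blocks := List.ofFn t.1
  blocks_pos {i} hi := by
    obtain ⟨j, rfl⟩ := List.mem_ofFn.1 hi
    exact (mem_comps.1 t.2).2 j
  blocks_sum := by rw [List.sum_ofFn]; exact (mem_comps.1 t.2).1

lemma card_comps_le (m n : ℕ) : #(comps m n) ≤ 2 ^ (n - 1) := by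
  rw [← composition_card, ← Fintype.card_coe]
  refine Fintype.card_le_of_injective compositionOfMemComps fun s t hst => ?_
  exact Subtype.ext (List.ofFn_injective (congrArg Composition.blocks hst))

lemma Finset.prod_le_apply_sum_of_supermultiplicative {ι α R : Type*} [AddCommMonoid α]
    [CommSemiring R] [PartialOrder R] [IsOrderedRing R] {N : α → R} (hN₀ : ∀ a, 0 ≤ N a)
    (hN : ∀ a b, N a * N b ≤ N (a + b)) (k : ι → α) {s : Finset ι} (hs : s.Nonempty) :
    ∏ i ∈ s, N (k i) ≤ N (∑ i ∈ s, k i) := by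
  refine hs.cons_induction (fun a => by simp) fun a s ha _ ih => ?_
  rw [prod_cons, sum_cons]
  exact (mul_le_mul_of_nonneg_left ih (hN₀ _)).trans (hN _ _)

section

variable {M : ℕ → ℝ} (hpos : ∀ n : ℕ, 1 ≤ n → 0 < M n)
    (hM : ∀ n : ℕ, 1 ≤ n → ∀ m : ℕ, 1 ≤ m → M n * M m ≤ M (n + m - 1))
include hpos hM

lemma prod_le_of_mem_comps {m n : ℕ} (hm : 1 ≤ m) {t : Fin m → ℕ} (ht : t ∈ comps m n) :
    ∏ i, M (t i) ≤ M (n - m + 1) := by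
  obtain ⟨hsum, hge⟩ := mem_comps.1 ht
  have key := prod_le_apply_sum_of_supermultiplicative (N := fun k => M (k + 1))
    (fun k => (hpos _ (Nat.le_add_left 1 k)).le)
    (fun a b => by simpa [add_right_comm] using hM (a + 1) (by omega) (b + 1) (by omega))
    (fun i => t i - 1) (univ_nonempty_iff.2 ⟨⟨0, hm⟩⟩)
  rw [sum_tsub_distrib _ fun i _ => hge i, hsum, sum_const, card_univ, Fintype.card_fin,
    smul_eq_mul, mul_one] at key
  simpa only [Nat.sub_add_cancel (hge _)] using key

lemma norm_sum_comps_prod_le {g : ℕ → ℂ} {b₁ b₂ : ℝ} (hb₁ : 0 ≤ b₁) (hb₂ : 0 ≤ b₂)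
    (hg : ∀ n : ℕ, 1 ≤ n → ‖g n‖ ≤ b₁ * b₂ ^ n * M n) {m n : ℕ} (hm : 1 ≤ m) :
    ‖∑ t ∈ comps m n, ∏ i, g (t i)‖ ≤ 2 ^ n * (b₁ ^ m * b₂ ^ n * M (n - m + 1)) := by
  have hterm : ∀ t ∈ comps m n, ‖∏ i, g (t i)‖ ≤ b₁ ^ m * b₂ ^ n * M (n - m + 1) := by
    intro t ht
    obtain ⟨hsum, hge⟩ := mem_comps.1 ht
    calc ‖∏ i, g (t i)‖ = ∏ i, ‖g (t i)‖ := norm_prod _ _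
      _ ≤ ∏ i, b₁ * b₂ ^ t i * M (t i) :=
        prod_le_prod (fun i _ => norm_nonneg _) fun i _ => hg _ (hge i)
      _ = b₁ ^ m * b₂ ^ n * ∏ i, M (t i) := by
        rw [prod_mul_distrib, prod_mul_distrib, prod_const, prod_pow_eq_pow_sum, hsum,
          card_univ, Fintype.card_fin]
      _ ≤ b₁ ^ m * b₂ ^ n * M (n - m + 1) := by
        gcongr
        exact prod_le_of_mem_comps hpos hM hm ht
  calc ‖∑ t ∈ comps m n, ∏ i, g (t i)‖
      ≤ #(comps m n) • (b₁ ^ m * b₂ ^ n * M (n - m + 1)) :=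
        (norm_sum_le _ _).trans (sum_le_card_nsmul _ _ _ hterm)
    _ ≤ 2 ^ n * (b₁ ^ m * b₂ ^ n * M (n - m + 1)) := by
      rw [nsmul_eq_mul]
      have : 0 < M (n - m + 1) := hpos _ (Nat.le_add_left 1 _)
      gcongr
      exact_mod_cast (card_comps_le m n).trans (Nat.pow_le_pow_right two_pos (n.sub_le 1))

lemma norm_compCoef_summand_le {f g : ℕ → ℂ} {a₁ a₂ b₁ b₂ : ℝ} (ha₁ : 0 ≤ a₁) (ha₂ : 0 ≤ a₂)
    (hb₁ : 0 ≤ b₁) (hb₂ : 0 ≤ b₂) (hf : ∀ n : ℕ, 1 ≤ n → ‖f n‖ ≤ a₁ * a₂ ^ n * M n)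
    (hg : ∀ n : ℕ, 1 ≤ n → ‖g n‖ ≤ b₁ * b₂ ^ n * M n) {m n : ℕ} (hm : m ∈ Icc 1 n) :
    ‖f m * ∑ t ∈ comps m n, ∏ i, g (t i)‖ ≤ a₁ * (a₂ * b₁) ^ m * (2 * b₂) ^ n * M n := by
  obtain ⟨hm₁, hmn⟩ := mem_Icc.1 hm
  have hsplit : M m * M (n - m + 1) ≤ M n := by
    simpa [show m + (n - m + 1) - 1 = n by omega] using hM m hm₁ (n - m + 1) (by omega)
  calc ‖f m * ∑ t ∈ comps m n, ∏ i, g (t i)‖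
      ≤ a₁ * a₂ ^ m * M m * (2 ^ n * (b₁ ^ m * b₂ ^ n * M (n - m + 1))) := by
        rw [norm_mul]
        exact mul_le_mul (hf m hm₁) (norm_sum_comps_prod_le hpos hM hb₁ hb₂ hg hm₁)
          (norm_nonneg _) ((norm_nonneg _).trans (hf m hm₁))
    _ = a₁ * (a₂ * b₁) ^ m * (2 * b₂) ^ n * (M m * M (n - m + 1)) := by ring
    _ ≤ a₁ * (a₂ * b₁) ^ m * (2 * b₂) ^ n * M n := by gcongr

end

theorem stmt11 (M : ℕ → ℝ) (hpos : ∀ n : ℕ, 1 ≤ n → 0 < M n)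
    (hM : ∀ n : ℕ, 1 ≤ n → ∀ m : ℕ, 1 ≤ m → M n * M m ≤ M (n + m - 1))
    (f g : ℕ → ℂ) (hf : InClass M f) (hg : InClass M g) :
    InClass M (compCoef f g) := by
  obtain ⟨a₁, ha₁, a₂, ha₂, hfb⟩ := hf
  obtain ⟨b₁, hb₁, b₂, hb₂, hgb⟩ := hg
  set K := max (a₂ * b₁) 1
  refine ⟨a₁, ha₁, 2 * (2 * b₂) * K, by positivity, fun n hn => ?_⟩
  have hK : ∀ m ∈ Icc 1 n, (a₂ * b₁) ^ m ≤ K ^ n := fun m hm =>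
    (pow_le_pow_left₀ (by positivity) (le_max_left _ _) m).trans
      (pow_le_pow_right₀ (le_max_right _ _) (mem_Icc.1 hm).2)
  have hn2 : (n : ℝ) ≤ 2 ^ n := by exact_mod_cast n.lt_two_pow_self.le
  have hMn := hpos n hn
  calc ‖compCoef f g n‖
      ≤ ∑ m ∈ Icc 1 n, a₁ * K ^ n * (2 * b₂) ^ n * M n := by
        refine norm_sum_le_of_le _ fun m hm => ?_
        refine (norm_compCoef_summand_le hpos hM ha₁.le ha₂.le hb₁.le hb₂.le hfb hgb hm).trans ?_
        gcongr
        exact hK m hm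
    _ = n * (a₁ * K ^ n * (2 * b₂) ^ n * M n) := by simp
    _ ≤ 2 ^ n * (a₁ * K ^ n * (2 * b₂) ^ n * M n) := by gcongr
    _ = a₁ * (2 * (2 * b₂) * K) ^ n * M n := by simp only [mul_pow]; ring
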